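/- arXiv:1310.0966 — 2 statements merged into one kernel-verified Lean document; each statement's English description precedes it below -/
import Mathlib

section
/- Trace norm of a difference of weighted qubit states in Bloch form: Let q₀, q₁ ∈ ℝ be nonnegative and let v₀, v₁ ∈ EuclideanSpace ℝ (Fin 3) with ‖v₀‖ ≤ 1 and ‖v₁‖ ≤ 1. The matrix A = q₀ • ρ(v₀) − q₁ • ρ(v₁) is Hermitian, and the sum over its eigenvalues of their absolute values equals max (‖q₀ • v₀ − q₁ • v₁‖) (|q₀ − q₁|); equivalently, its two eigenvalues are ((q₀ − q₁) ± ‖q₀ • v₀ − q₁ • v₁‖)/2. -/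
open Matrix Complex Finset RealInnerProductSpace
open scoped ComplexOrder

/-- The first Pauli matrix. -/
noncomputable def pauli1 : Matrix (Fin 2) (Fin 2) ℂ := !![0, 1; 1, 0]

/-- The second Pauli matrix. -/
noncomputable def pauli2 : Matrix (Fin 2) (Fin 2) ℂ := !![0, -Complex.I; Complex.I, 0]

/-- The third Pauli matrix. -/
noncomputable def pauli3 : Matrix (Fin 2) (Fin 2) ℂ := !![1, 0; 0, -1]

/-- The operator `v ⬝ σ` for a Bloch vector `v`. -/
noncomputable def blochOp (v : EuclideanSpace ℝ (Fin 3)) : Matrix (Fin 2) (Fin 2) ℂ :=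
  (v 0 : ℂ) • pauli1 + (v 1 : ℂ) • pauli2 + (v 2 : ℂ) • pauli3

/-- The qubit state with Bloch vector `v`. -/
noncomputable def qubitState (v : EuclideanSpace ℝ (Fin 3)) : Matrix (Fin 2) (Fin 2) ℂ :=
  (1 / 2 : ℂ) • (1 + blochOp v)

/-- An `N`-outcome POVM on `ℂ^d`. -/
def IsPOVM {N d : ℕ} (M : Fin N → Matrix (Fin d) (Fin d) ℂ) : Prop :=
  (∀ i, (M i).PosSemidef) ∧ ∑ i, M i = 1

/-- Priors: a probability distribution. -/
def IsPriors {N : ℕ} (q : Fin N → ℝ) : Prop :=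
  (∀ i, 0 ≤ q i) ∧ ∑ i, q i = 1

/-- Success probability of the POVM `M` for qubit states with Bloch vectors `v`
and priors `q`. -/
noncomputable def succProb {N : ℕ} (q : Fin N → ℝ) (v : Fin N → EuclideanSpace ℝ (Fin 3))
    (M : Fin N → Matrix (Fin 2) (Fin 2) ℂ) : ℝ :=
  ∑ i, q i * (Matrix.trace (qubitState (v i) * M i)).re

/-- The geometric KKT conditions for `(q, v)` satisfied by `(r, w)`. -/
def GeomKKT {N : ℕ} (q : Fin N → ℝ) (v : Fin N → EuclideanSpace ℝ (Fin 3))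
    (r : Fin N → ℝ) (w : Fin N → EuclideanSpace ℝ (Fin 3)) : Prop :=
  (∀ i j, r i • w i - r j • w j = q j • v j - q i • v i) ∧
  (∃ p : Fin N → ℝ, (∀ i, 0 < p i) ∧ (∑ i, p i = 1) ∧ (∑ i, p i • w i = 0)) ∧
  (∀ i, ‖w i‖ = 1) ∧
  (∀ i j, r i - r j = q j - q i)

/-! Both states are affine in their Bloch vectors, so the weighted difference is
`½ ((q₀ - q₁) + w ⬝ σ)` with `w = q₀ • v₀ - q₁ • v₁`. Since `det (t + w ⬝ σ) = t² - ‖w‖²`, its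
trace and determinant are those of a matrix with eigenvalues `((q₀ - q₁) ± ‖w‖) / 2`, and for a
Hermitian `2 × 2` matrix trace and determinant determine the eigenvalues. Finally
`|x + y| + |x - y| = 2 max |x| |y|`. -/

theorem abs_add_div_two_add_abs_sub_div_two (x y : ℝ) :
    |(x + y) / 2| + |(x - y) / 2| = max |x| |y| := by
  rcases abs_cases x with ⟨hx, _⟩ | ⟨hx, _⟩ <;> rcases abs_cases y with ⟨hy, _⟩ | ⟨hy, _⟩ <;>
    rcases abs_cases ((x + y) / 2) with ⟨h₁, _⟩ | ⟨h₁, _⟩ <;>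
    rcases abs_cases ((x - y) / 2) with ⟨h₂, _⟩ | ⟨h₂, _⟩ <;>
    rcases max_cases |x| |y| with ⟨hm, _⟩ | ⟨hm, _⟩ <;> linarith

theorem Matrix.IsHermitian.exists_perm_eigenvalues_fin_two {𝕜 : Type*} [RCLike 𝕜]
    {A : Matrix (Fin 2) (Fin 2) 𝕜} (hA : A.IsHermitian) {a b : ℝ}
    (htr : A.trace = (a + b : ℝ)) (hdet : A.det = (a * b : ℝ)) :
    ∃ σ : Equiv.Perm (Fin 2), hA.eigenvalues (σ 0) = a ∧ hA.eigenvalues (σ 1) = b := by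
  have hsum : hA.eigenvalues 0 + hA.eigenvalues 1 = a + b := by
    have h := hA.trace_eq_sum_eigenvalues
    rw [Fin.sum_univ_two, htr] at h
    exact_mod_cast h.symm
  have hprod : hA.eigenvalues 0 * hA.eigenvalues 1 = a * b := by
    have h := hA.det_eq_prod_eigenvalues
    rw [Fin.prod_univ_two, hdet] at h
    exact_mod_cast h.symm
  have hroot : (hA.eigenvalues 0 - a) * (hA.eigenvalues 0 - b) = 0 := by
    linear_combination hA.eigenvalues 0 * hsum - hprod
  rcases mul_eq_zero.mp hroot with h | h
  · exact ⟨1, by rw [Equiv.Perm.one_apply]; linarith, by rw [Equiv.Perm.one_apply]; linarith⟩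
  · exact ⟨Equiv.swap 0 1, by rw [Equiv.swap_apply_left]; linarith,
      by rw [Equiv.swap_apply_right]; linarith⟩

theorem isHermitian_blochOp (v : EuclideanSpace ℝ (Fin 3)) : (blochOp v).IsHermitian := by
  ext i j
  fin_cases i <;> fin_cases j <;> simp [blochOp, pauli1, pauli2, pauli3]

theorem isHermitian_qubitState (v : EuclideanSpace ℝ (Fin 3)) : (qubitState v).IsHermitian :=
  (isHermitian_one.add (isHermitian_blochOp v)).smul (by simp [IsSelfAdjoint])

theorem blochOp_sub (v w : EuclideanSpace ℝ (Fin 3)) :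
    blochOp (v - w) = blochOp v - blochOp w := by
  simp only [blochOp, PiLp.sub_apply, Complex.ofReal_sub, sub_smul]
  abel

theorem blochOp_smul (c : ℝ) (v : EuclideanSpace ℝ (Fin 3)) :
    blochOp (c • v) = (c : ℂ) • blochOp v := by
  simp only [blochOp, PiLp.smul_apply, smul_eq_mul, Complex.ofReal_mul, mul_smul, smul_add]

theorem smul_one_add_blochOp (t : ℝ) (v : EuclideanSpace ℝ (Fin 3)) :
    (t : ℂ) • 1 + blochOp v =
      !![(t + v 2 : ℂ), (v 0 - v 1 * Complex.I : ℂ); (v 0 + v 1 * Complex.I : ℂ),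
        (t - v 2 : ℂ)] := by
  ext i j
  fin_cases i <;> fin_cases j <;> simp [blochOp, pauli1, pauli2, pauli3] <;> ring

theorem det_smul_one_add_blochOp (t : ℝ) (v : EuclideanSpace ℝ (Fin 3)) :
    ((t : ℂ) • 1 + blochOp v).det = (t ^ 2 - ‖v‖ ^ 2 : ℝ) := by
  rw [smul_one_add_blochOp, det_fin_two_of, EuclideanSpace.real_norm_sq_eq, Fin.sum_univ_three]
  push_cast
  linear_combination (v 1 : ℂ) ^ 2 * Complex.I_sq

theorem smul_qubitState_sub_smul_qubitState (q₀ q₁ : ℝ) (v₀ v₁ : EuclideanSpace ℝ (Fin 3)) :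
    (q₀ : ℂ) • qubitState v₀ - (q₁ : ℂ) • qubitState v₁ =
      (1 / 2 : ℂ) • (((q₀ - q₁ : ℝ) : ℂ) • 1 + blochOp (q₀ • v₀ - q₁ • v₁)) := by
  simp only [qubitState, blochOp_sub, blochOp_smul, Complex.ofReal_sub]
  module

theorem trace_norm_weighted_difference_general
    (q₀ q₁ : ℝ)
    (v₀ v₁ : EuclideanSpace ℝ (Fin 3)) :
    ((q₀ : ℂ) • qubitState v₀ - (q₁ : ℂ) • qubitState v₁).IsHermitian ∧
    ∀ hA : ((q₀ : ℂ) • qubitState v₀ - (q₁ : ℂ) • qubitState v₁).IsHermitian,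
      (∑ i, |hA.eigenvalues i| = max ‖q₀ • v₀ - q₁ • v₁‖ |q₀ - q₁|) ∧
      ∃ σ : Equiv.Perm (Fin 2),
        hA.eigenvalues (σ 0) = ((q₀ - q₁) + ‖q₀ • v₀ - q₁ • v₁‖) / 2 ∧
        hA.eigenvalues (σ 1) = ((q₀ - q₁) - ‖q₀ • v₀ - q₁ • v₁‖) / 2 := by
  have hreal (q : ℝ) : IsSelfAdjoint (q : ℂ) := Complex.conj_ofReal q
  refine ⟨((isHermitian_qubitState v₀).smul (hreal q₀)).sub
    ((isHermitian_qubitState v₁).smul (hreal q₁)), fun hA => ?_⟩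
  have hdecomp := smul_qubitState_sub_smul_qubitState q₀ q₁ v₀ v₁
  set t := q₀ - q₁
  set n := ‖q₀ • v₀ - q₁ • v₁‖
  have htr : ((q₀ : ℂ) • qubitState v₀ - (q₁ : ℂ) • qubitState v₁).trace =
      ((t + n) / 2 + (t - n) / 2 : ℝ) := by
    rw [hdecomp, trace_smul, smul_one_add_blochOp, trace_fin_two_of]
    push_cast
    ring
  have hdet : ((q₀ : ℂ) • qubitState v₀ - (q₁ : ℂ) • qubitState v₁).det =
      ((t + n) / 2 * ((t - n) / 2) : ℝ) := by
    rw [hdecomp, det_smul, det_smul_one_add_blochOp, Fintype.card_fin]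
    push_cast
    ring
  obtain ⟨σ, h₀, h₁⟩ := hA.exists_perm_eigenvalues_fin_two htr hdet
  refine ⟨?_, σ, h₀, h₁⟩
  rw [← Equiv.sum_comp σ, Fin.sum_univ_two, h₀, h₁, abs_add_div_two_add_abs_sub_div_two,
    abs_of_nonneg (norm_nonneg _), max_comm]

/-- Trace norm of a difference of weighted qubit states in Bloch form: the matrix
`q₀ • ρ(v₀) - q₁ • ρ(v₁)` is Hermitian, the sum of the absolute values of its
eigenvalues is `max ‖q₀ • v₀ - q₁ • v₁‖ |q₀ - q₁|`, and its two eigenvalues are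
`((q₀ - q₁) ± ‖q₀ • v₀ - q₁ • v₁‖) / 2`. -/
theorem trace_norm_weighted_difference
    (q₀ q₁ : ℝ) (hq₀ : 0 ≤ q₀) (hq₁ : 0 ≤ q₁)
    (v₀ v₁ : EuclideanSpace ℝ (Fin 3)) (hv₀ : ‖v₀‖ ≤ 1) (hv₁ : ‖v₁‖ ≤ 1) :
    ((q₀ : ℂ) • qubitState v₀ - (q₁ : ℂ) • qubitState v₁).IsHermitian ∧
    ∀ hA : ((q₀ : ℂ) • qubitState v₀ - (q₁ : ℂ) • qubitState v₁).IsHermitian,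
      (∑ i, |hA.eigenvalues i| = max ‖q₀ • v₀ - q₁ • v₁‖ |q₀ - q₁|) ∧
      ∃ σ : Equiv.Perm (Fin 2),
        hA.eigenvalues (σ 0) = ((q₀ - q₁) + ‖q₀ • v₀ - q₁ • v₁‖) / 2 ∧
        hA.eigenvalues (σ 1) = ((q₀ - q₁) - ‖q₀ • v₀ - q₁ • v₁‖) / 2 :=
  trace_norm_weighted_difference_general q₀ q₁ v₀ v₁
end

section
/- Three symmetric qubit states with equal priors: Let v : Fin 3 → EuclideanSpace ℝ (Fin 3) and let R, γ ∈ ℝ with γ < R ≤ 1, such that ⟪v i, v i⟫ = R for all i and ⟪v i, v j⟫ = γ for all i ≠ j. Let q : Fin 3 → ℝ be the constant prior q i = 1/3. Then (1/3) * (1 + Real.sqrt (2*(R − γ)/3)) is the greatest element of the set of success probabilities {P(M) : M a 3-outcome POVM}. -/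
open Matrix Complex Finset RealInnerProductSpace
open scoped ComplexOrder

/-!
Write a Hermitian `M` as `a • 1 + b ⬝ σ`. Then `Re tr (ρ(v) M) = a + ⟪v, b⟫`, and positivity of
`M` (nonnegative trace and determinant) means `‖b‖ ≤ a`. For a POVM the `a`'s sum to `1` and the
`b`'s to `0`, so for every vector `c` the success probability equals
`∑ (qᵢ aᵢ + ⟪qᵢ vᵢ - c, bᵢ⟫)`, which is at most `maxᵢ (qᵢ + ‖qᵢ vᵢ - c‖)`. For three symmetric
states and `c` a third of their centroid this is `(1 + s) / 3`, where `s = √(2(R - γ)/3)` is the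
common distance of the `vᵢ` to the centroid. The bound is attained by measuring the pure states
along the unit vectors from the centroid to the `vᵢ`, which sum to zero.
-/

/- For Hermitian `M` these are the coordinates in `M = blochScalar M • 1 + blochVector M ⬝ σ`. -/
noncomputable def blochScalar : Matrix (Fin 2) (Fin 2) ℂ →ₗ[ℝ] ℝ where
  toFun M := ((M 0 0).re + (M 1 1).re) / 2
  map_add' M N := by simp only [Matrix.add_apply, Complex.add_re]; ring
  map_smul' r M := by simp only [Matrix.smul_apply, Complex.real_smul, Complex.re_ofReal_mul,
    RingHom.id_apply, smul_eq_mul]; ring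

noncomputable def blochVector : Matrix (Fin 2) (Fin 2) ℂ →ₗ[ℝ] EuclideanSpace ℝ (Fin 3) where
  toFun M := !₂[((M 0 1).re + (M 1 0).re) / 2, ((M 1 0).im - (M 0 1).im) / 2,
    ((M 0 0).re - (M 1 1).re) / 2]
  map_add' M N := by ext i; fin_cases i <;> simp <;> ring
  map_smul' r M := by ext i; fin_cases i <;> simp <;> ring

lemma re_trace_qubitState_mul (v : EuclideanSpace ℝ (Fin 3)) (M : Matrix (Fin 2) (Fin 2) ℂ) :
    (trace (qubitState v * M)).re = blochScalar M + ⟪v, blochVector M⟫ := by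
  simp [blochScalar, blochVector, PiLp.inner_apply, Fin.sum_univ_three, trace, mul_apply,
    Fin.sum_univ_two, qubitState, blochOp, pauli1, pauli2, pauli3, one_apply]
  ring

lemma blochScalar_qubitState (w : EuclideanSpace ℝ (Fin 3)) :
    blochScalar (qubitState w) = 1 / 2 := by
  simp [blochScalar, qubitState, blochOp, pauli1, pauli2, pauli3]
  ring

lemma blochVector_qubitState (w : EuclideanSpace ℝ (Fin 3)) :
    blochVector (qubitState w) = (1 / 2 : ℝ) • w := by
  ext i
  fin_cases i <;> simp [blochVector, qubitState, blochOp, pauli1, pauli2, pauli3]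

lemma Matrix.PosSemidef.norm_blochVector_le {M : Matrix (Fin 2) (Fin 2) ℂ} (hM : M.PosSemidef) :
    ‖blochVector M‖ ≤ blochScalar M := by
  have hdiag0 : (M 0 0).im = 0 := Complex.conj_eq_iff_im.mp (hM.1.apply 0 0)
  have hdiag1 : (M 1 1).im = 0 := Complex.conj_eq_iff_im.mp (hM.1.apply 1 1)
  have hoff : M 1 0 = star (M 0 1) := (hM.1.apply 1 0).symm
  have htrace : 0 ≤ blochScalar M := by
    have := (Complex.nonneg_iff.mp hM.trace_nonneg).1
    simp only [trace, Fin.sum_univ_two, diag_apply, Complex.add_re] at this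
    simp only [blochScalar, LinearMap.coe_mk, AddHom.coe_mk]
    linarith
  have hdet : ‖blochVector M‖ ^ 2 ≤ blochScalar M ^ 2 := by
    have := (Complex.nonneg_iff.mp hM.det_nonneg).1
    rw [det_fin_two, hoff] at this
    rw [EuclideanSpace.norm_sq_eq]
    simp [blochScalar, blochVector, Fin.sum_univ_three, Complex.mul_re, hdiag0, hdiag1, hoff]
      at this ⊢
    nlinarith
  exact (sq_le_sq₀ (norm_nonneg _) htrace).mp hdet

lemma blochOp_mul_self (w : EuclideanSpace ℝ (Fin 3)) :
    blochOp w * blochOp w = ((‖w‖ ^ 2 : ℝ) : ℂ) • 1 := by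
  rw [EuclideanSpace.norm_sq_eq]
  ext i j
  fin_cases i <;> fin_cases j <;>
    simp [blochOp, pauli1, pauli2, pauli3, mul_apply, Fin.sum_univ_two, Fin.sum_univ_three] <;>
    ring_nf <;> simp [Complex.I_sq]

lemma qubitState_isHermitian (w : EuclideanSpace ℝ (Fin 3)) : (qubitState w).IsHermitian := by
  ext i j
  fin_cases i <;> fin_cases j <;>
    simp [qubitState, blochOp, pauli1, pauli2, pauli3, Complex.ext_iff] <;> ring

lemma qubitState_mul_self_of_norm_eq_one {w : EuclideanSpace ℝ (Fin 3)} (hw : ‖w‖ = 1) :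
    qubitState w * qubitState w = qubitState w := by
  simp only [qubitState, smul_mul_smul, add_mul, mul_add, blochOp_mul_self, hw, one_mul, mul_one]
  ext i j
  fin_cases i <;> fin_cases j <;> simp <;> ring

-- A pure state is a Hermitian idempotent `P`, hence equal to `Pᴴ * P`.
lemma qubitState_posSemidef_of_norm_eq_one {w : EuclideanSpace ℝ (Fin 3)} (hw : ‖w‖ = 1) :
    (qubitState w).PosSemidef := by
  have h := posSemidef_conjTranspose_mul_self (qubitState w)
  rwa [(qubitState_isHermitian w).eq, qubitState_mul_self_of_norm_eq_one hw] at h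

lemma sum_smul_blochOp {ι : Type*} (s : Finset ι) (p : ι → ℝ) (w : ι → EuclideanSpace ℝ (Fin 3)) :
    ∑ i ∈ s, p i • blochOp (w i) = blochOp (∑ i ∈ s, p i • w i) := by
  ext j k
  simp [blochOp, Matrix.sum_apply, Finset.sum_add_distrib, Finset.sum_mul, mul_assoc]

lemma two_mul_smul_qubitState (r : ℝ) (w : EuclideanSpace ℝ (Fin 3)) :
    (2 * r) • qubitState w = r • (1 + blochOp w) := by
  ext j k
  simp [qubitState]
  ring

lemma isPOVM_of_sum_smul_eq_zero {N : ℕ} {p : Fin N → ℝ} {w : Fin N → EuclideanSpace ℝ (Fin 3)}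
    (hp : ∀ i, 0 ≤ p i) (hp1 : ∑ i, p i = 1) (hw : ∀ i, ‖w i‖ = 1) (hpw : ∑ i, p i • w i = 0) :
    IsPOVM fun i => (2 * p i) • qubitState (w i) := by
  refine ⟨fun i => (qubitState_posSemidef_of_norm_eq_one (hw i)).smul (by linarith [hp i]), ?_⟩
  calc ∑ i, (2 * p i) • qubitState (w i) = ∑ i, (p i • 1 + p i • blochOp (w i)) := by
        simp only [two_mul_smul_qubitState, smul_add]
    _ = 1 := by
        rw [Finset.sum_add_distrib, ← Finset.sum_smul, sum_smul_blochOp, hp1, hpw]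
        simp [blochOp]

lemma succProb_two_mul_smul_qubitState {N : ℕ} (q p : Fin N → ℝ)
    (v w : Fin N → EuclideanSpace ℝ (Fin 3)) :
    succProb q v (fun i => (2 * p i) • qubitState (w i)) = ∑ i, q i * p i * (1 + ⟪v i, w i⟫) := by
  simp only [succProb, re_trace_qubitState_mul, map_smul, blochScalar_qubitState,
    blochVector_qubitState, smul_eq_mul, real_inner_smul_right]
  congr 1 with i
  ring

theorem succProb_le_of_forall_add_norm_sub_le {N : ℕ} {q : Fin N → ℝ}
    {v : Fin N → EuclideanSpace ℝ (Fin 3)} {M : Fin N → Matrix (Fin 2) (Fin 2) ℂ}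
    (hM : IsPOVM M) (c : EuclideanSpace ℝ (Fin 3)) {t : ℝ}
    (h : ∀ i, q i + ‖q i • v i - c‖ ≤ t) : succProb q v M ≤ t := by
  obtain ⟨hpsd, hsum⟩ := hM
  have hscalar : ∑ i, blochScalar (M i) = 1 := by
    rw [← map_sum, hsum]
    simp [blochScalar]
  have hvector : ∑ i, blochVector (M i) = 0 := by
    rw [← map_sum, hsum]
    ext k
    fin_cases k <;> simp [blochVector]
  -- subtracting `c` costs nothing, since the Bloch vectors of a POVM sum to zero
  have hshift : succProb q v M
      = ∑ i, (q i * blochScalar (M i) + ⟪q i • v i - c, blochVector (M i)⟫) := by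
    simp only [inner_sub_left, ← add_sub_assoc, Finset.sum_sub_distrib, ← inner_sum, hvector,
      inner_zero_right, sub_zero, succProb, re_trace_qubitState_mul, real_inner_smul_left, mul_add]
  have hterm : ∀ i, q i * blochScalar (M i) + ⟪q i • v i - c, blochVector (M i)⟫
      ≤ t * blochScalar (M i) := by
    intro i
    have hb := (hpsd i).norm_blochVector_le
    have ha : 0 ≤ blochScalar (M i) := (norm_nonneg _).trans hb
    calc q i * blochScalar (M i) + ⟪q i • v i - c, blochVector (M i)⟫
        ≤ q i * blochScalar (M i) + ‖q i • v i - c‖ * ‖blochVector (M i)‖ := by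
          gcongr; exact real_inner_le_norm _ _
      _ ≤ (q i + ‖q i • v i - c‖) * blochScalar (M i) := by
          rw [add_mul]; gcongr
      _ ≤ t * blochScalar (M i) := by gcongr; exact h i
  calc succProb q v M ≤ ∑ i, t * blochScalar (M i) := hshift ▸ Finset.sum_le_sum fun i _ => hterm i
    _ = t := by rw [← Finset.mul_sum, hscalar, mul_one]

lemma sum_sub_centroid {E ι : Type*} [AddCommGroup E] [Module ℝ E] [Fintype ι] [Nonempty ι]
    (v : ι → E) : ∑ i, (v i - (Fintype.card ι : ℝ)⁻¹ • ∑ j, v j) = 0 := by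
  have hn : (Fintype.card ι : ℝ) ≠ 0 := Nat.cast_ne_zero.mpr Fintype.card_ne_zero
  rw [Finset.sum_sub_distrib, Finset.sum_const, Finset.card_univ, ← Nat.cast_smul_eq_nsmul ℝ,
    smul_smul, mul_inv_cancel₀ hn, one_smul, sub_self]

section Gram

variable {E ι : Type*} [NormedAddCommGroup E] [InnerProductSpace ℝ E] [Fintype ι] [DecidableEq ι]
  {v : ι → E} {R γ : ℝ}

lemma inner_centroid_of_gram (hv : ∀ i j, ⟪v i, v j⟫ = if i = j then R else γ) (i : ι) :
    ⟪v i, (Fintype.card ι : ℝ)⁻¹ • ∑ j, v j⟫ = γ + (R - γ) / Fintype.card ι := by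
  have hn : (Fintype.card ι : ℝ) ≠ 0 := Nat.cast_ne_zero.mpr (Fintype.card_pos_iff.mpr ⟨i⟩).ne'
  have hgram : ∀ j, ⟪v i, v j⟫ = γ + if i = j then R - γ else 0 := fun j => by
    rw [hv]; split_ifs <;> ring
  simp only [real_inner_smul_right, inner_sum, hgram, Finset.sum_add_distrib, Finset.sum_ite_eq,
    Finset.mem_univ, if_true, Finset.sum_const, Finset.card_univ, nsmul_eq_mul]
  field_simp

lemma inner_sub_centroid_of_gram (hv : ∀ i j, ⟪v i, v j⟫ = if i = j then R else γ) (i : ι) :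
    ⟪v i, v i - (Fintype.card ι : ℝ)⁻¹ • ∑ j, v j⟫ = (R - γ) * (1 - (Fintype.card ι : ℝ)⁻¹) := by
  rw [inner_sub_right, inner_centroid_of_gram hv, hv, if_pos rfl]
  ring

lemma norm_sub_centroid_sq_of_gram (hv : ∀ i j, ⟪v i, v j⟫ = if i = j then R else γ) (i : ι) :
    ‖v i - (Fintype.card ι : ℝ)⁻¹ • ∑ j, v j‖ ^ 2 = (R - γ) * (1 - (Fintype.card ι : ℝ)⁻¹) := by
  have hn : (Fintype.card ι : ℝ) ≠ 0 := Nat.cast_ne_zero.mpr (Fintype.card_pos_iff.mpr ⟨i⟩).ne'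
  set c := (Fintype.card ι : ℝ)⁻¹ • ∑ j, v j with hc
  have hcc : ⟪c, c⟫ = γ + (R - γ) / Fintype.card ι := by
    conv_lhs => rw [hc, real_inner_smul_left, sum_inner]
    simp only [inner_centroid_of_gram hv, Finset.sum_const, Finset.card_univ, nsmul_eq_mul]
    field_simp
  rw [← real_inner_self_eq_norm_sq, inner_sub_left, inner_sub_centroid_of_gram hv, inner_sub_right,
    real_inner_comm, inner_centroid_of_gram hv, hcc]
  ring

end Gram

theorem three_symmetric_states_general
    (v : Fin 3 → EuclideanSpace ℝ (Fin 3)) (R γ : ℝ)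
    (hγR : γ < R)
    (hvv : ∀ i, ⟪v i, v i⟫ = R)
    (hvij : ∀ i j, i ≠ j → ⟪v i, v j⟫ = γ) :
    IsGreatest {x | ∃ M : Fin 3 → Matrix (Fin 2) (Fin 2) ℂ,
        IsPOVM M ∧ succProb (fun _ => 1 / 3) v M = x}
      ((1 / 3) * (1 + Real.sqrt (2 * (R - γ) / 3))) := by
  have hgram : ∀ i j, ⟪v i, v j⟫ = if i = j then R else γ := fun i j => by
    split_ifs with h
    · exact h ▸ hvv i
    · exact hvij i j h
  set c := (Fintype.card (Fin 3) : ℝ)⁻¹ • ∑ j, v j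
  set s := Real.sqrt (2 * (R - γ) / 3)
  have hs : 0 < s := Real.sqrt_pos.mpr (by linarith)
  have hcard : (Fintype.card (Fin 3) : ℝ) = 3 := by simp
  have hnorm : ∀ i, ‖v i - c‖ = s := fun i => by
    rw [← Real.sqrt_sq (norm_nonneg _), norm_sub_centroid_sq_of_gram hgram, hcard]
    congr 1
    ring
  have hinner : ∀ i, ⟪v i, s⁻¹ • (v i - c)⟫ = s := fun i => by
    rw [real_inner_smul_right, inner_sub_centroid_of_gram hgram, hcard,
      inv_mul_eq_iff_eq_mul₀ hs.ne', ← sq, Real.sq_sqrt (by linarith)]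
    ring
  constructor
  · refine ⟨_, isPOVM_of_sum_smul_eq_zero (p := fun _ => 1 / 3) (w := fun i => s⁻¹ • (v i - c))
      (fun _ => by norm_num) (by simp) (fun i => ?_) ?_, ?_⟩
    · rw [norm_smul, hnorm, Real.norm_eq_abs, abs_of_pos (inv_pos.mpr hs), inv_mul_cancel₀ hs.ne']
    · rw [← Finset.smul_sum, ← Finset.smul_sum, sum_sub_centroid, smul_zero, smul_zero]
    · rw [succProb_two_mul_smul_qubitState]
      simp only [hinner, Fin.sum_univ_three]
      ring
  · rintro _ ⟨M, hM, rfl⟩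
    refine succProb_le_of_forall_add_norm_sub_le hM ((1 / 3 : ℝ) • c) fun i => le_of_eq ?_
    rw [← smul_sub, norm_smul, hnorm, Real.norm_of_nonneg (by norm_num)]
    ring

/-- Three symmetric qubit states with equal priors: the guessing probability is
`(1/3) (1 + √(2(R - γ)/3))`. -/
theorem three_symmetric_states
    (v : Fin 3 → EuclideanSpace ℝ (Fin 3)) (R γ : ℝ)
    (hγR : γ < R) (hR : R ≤ 1)
    (hvv : ∀ i, ⟪v i, v i⟫ = R)
    (hvij : ∀ i j, i ≠ j → ⟪v i, v j⟫ = γ) :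
    IsGreatest {x | ∃ M : Fin 3 → Matrix (Fin 2) (Fin 2) ℂ,
        IsPOVM M ∧ succProb (fun _ => 1 / 3) v M = x}
      ((1 / 3) * (1 + Real.sqrt (2 * (R - γ) / 3))) :=
  three_symmetric_states_general v R γ hγR hvv hvij
end
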